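/- arXiv:1309.6350 — 5 statements merged into one kernel-verified Lean document; each statement's English description precedes it below -/
import Mathlib

section
/- Let q be a prime power and θ a generator of the multiplicative group of the finite field F_{q^2}. Then the set A(q,θ) = { a ∈ Z/(q^2−1)Z : θ^a − θ ∈ F_q } has exactly q elements. -/
/-!
Since `θ` generates `K^*`, the exponent map `a ↦ θ ^ a` identifies `ℤ/(q^2 - 1)` with `K^*`, so
the set counts the units `u` with `u - θ ∈ F`, i.e. the nonzero elements of the coset `θ + F`.
The generator `θ` cannot lie in the proper subfield `F`, so `0 ∉ θ + F` and the coset, which has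
`|F| = q` elements, consists of units.
-/

open Subgroup

theorem zmodMulEquivOfGenerator_apply_ofAdd_eq_pow_val {G : Type*} [Group G] {g : G}
    (hg : ∀ x, x ∈ zpowers g) {n : ℕ} [NeZero n] (hn : Nat.card G = n) (a : ZMod n) :
    zmodMulEquivOfGenerator hg hn (Multiplicative.ofAdd a) = g ^ a.val := by
  conv_lhs => rw [← ZMod.natCast_zmod_val a, ← Int.cast_natCast]
  rw [zmodMulEquivOfGenerator_apply_ofAdd_intCast, zpow_natCast]

theorem card_setOf_pow_val_eq_of_forall_mem_zpowers {G : Type*} [Group G] {g : G}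
    (hg : ∀ x, x ∈ zpowers g) {n : ℕ} [NeZero n] (hn : Nat.card G = n) (P : G → Prop) :
    Nat.card {a : ZMod n | P (g ^ a.val)} = Nat.card {x : G | P x} :=
  Nat.card_congr <|
    (Multiplicative.ofAdd.trans (zmodMulEquivOfGenerator hg hn).toEquiv).subtypeEquiv fun a => by
      simp [zmodMulEquivOfGenerator_apply_ofAdd_eq_pow_val]

namespace Subfield

variable {K : Type*} [Field K] (F : Subfield K)

theorem eq_top_of_generator_mem {θ : Kˣ} (hθ : ∀ x : Kˣ, x ∈ zpowers θ) (h : (θ : K) ∈ F) :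
    F = ⊤ := by
  refine eq_top_iff.mpr fun x _ => ?_
  rcases eq_or_ne x 0 with rfl | hx
  · exact F.zero_mem
  obtain ⟨k, hk⟩ := hθ (Units.mk0 x hx)
  have hx' : (θ : K) ^ k = x := by simpa using congrArg Units.val hk
  exact hx' ▸ F.zpow_mem h k

theorem card_setOf_units_sub_mem {t : K} (ht : t ∉ F) :
    Nat.card {u : Kˣ | (u : K) - t ∈ F} = Nat.card F := by
  have hne (c : F) : t + c ≠ 0 := fun h => ht <| by simp [eq_neg_of_add_eq_zero_left h]
  exact Nat.card_congr
    { toFun u := ⟨u.1 - t, u.2⟩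
      invFun c := ⟨Units.mk0 (t + c) (hne c), by simp⟩
      left_inv u := by ext; simp
      right_inv c := by ext; simp }

end Subfield

/-- The Bose–Chowla set has exactly q elements. -/
theorem stmt_1 (q : ℕ) (hq : ∃ p n : ℕ, p.Prime ∧ 0 < n ∧ q = p ^ n)
    {K : Type*} [Field K] (hK : Nat.card K = q ^ 2)
    (F : Subfield K) (hF : Nat.card F = q)
    (θ : Kˣ) (hθ : ∀ x : Kˣ, x ∈ Subgroup.zpowers θ) :
    Nat.card {a : ZMod (q ^ 2 - 1) | ((θ : K) ^ a.val - (θ : K)) ∈ F} = q := by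
  obtain ⟨p, m, hp, hm, rfl⟩ := hq
  have hq : 2 ≤ p ^ m := hp.two_le.trans (Nat.le_self_pow hm.ne' p)
  have hq_lt : p ^ m < (p ^ m) ^ 2 := by nlinarith
  have : NeZero ((p ^ m) ^ 2 - 1) := ⟨by omega⟩
  have hθF : (θ : K) ∉ F := fun h => by
    have hcard := Nat.card_congr (Subfield.topEquiv (K := K)).toEquiv
    rw [← F.eq_top_of_generator_mem hθ h, hF, hK] at hcard
    omega
  have hunits : Nat.card Kˣ = (p ^ m) ^ 2 - 1 := by rw [Nat.card_units, hK]
  simpa only [Units.val_pow_eq_pow_val, hF] using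
    (card_setOf_pow_val_eq_of_forall_mem_zpowers hθ hunits
      (fun u : Kˣ => (u : K) - θ ∈ F)).trans (F.card_setOf_units_sub_mem hθF)
end

section
/- Let q be a prime power, θ a generator of F_{q^2}^*, and A = { a ∈ Z/(q^2−1)Z : θ^a − θ ∈ F_q }. Then A is a Sidon set in Z/(q^2−1)Z: if a + b = c + d with a, b, c, d ∈ A, then {a,b} = {c,d} as multisets. -/
/-!
Write `x ↦ θ ^ x` for the exponential `ZMod (q ^ 2 - 1) → K`, which is injective and turns sums into
products. The elements `θ ^ a` with `a ∈ A` lie on the line `θ + F`, and a product `(θ + x) * (θ + y)`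
with `x, y ∈ F` equals `θ ^ 2 + (x + y) θ + x y`. Since `θ ∉ F` (it generates `Kˣ` while `F` is
proper), equal products on this line force equal sums and products of `x, y`, hence equal pairs.
-/

theorem eq_and_eq_or_eq_and_eq_of_add_eq_add_of_mul_eq_mul {R : Type*} [CommRing R]
    [NoZeroDivisors R] {a b c d : R} (hs : a + b = c + d) (hp : a * b = c * d) :
    (a = c ∧ b = d) ∨ (a = d ∧ b = c) := by
  have h : (a - c) * (a - d) = 0 := by linear_combination a * hs - hp
  rcases mul_eq_zero.mp h with hac | had
  · exact Or.inl ⟨by linear_combination hac, by linear_combination hs - hac⟩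
  · exact Or.inr ⟨by linear_combination had, by linear_combination hs - had⟩

namespace Subfield

variable {K : Type*} [Field K] {F : Subfield K}

theorem coe_notMem_of_forall_mem_zpowers {θ : Kˣ} (hθ : ∀ x : Kˣ, x ∈ Subgroup.zpowers θ)
    (hF : F ≠ ⊤) : (θ : K) ∉ F := by
  intro hθF
  refine hF (eq_top_iff.mpr fun x _ => ?_)
  rcases eq_or_ne x 0 with rfl | hx
  · exact F.zero_mem
  obtain ⟨k, hk⟩ := Subgroup.mem_zpowers_iff.mp (hθ (Units.mk0 x hx))
  rw [← Units.val_mk0 hx, ← hk, Units.val_zpow_eq_zpow_val]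
  exact F.zpow_mem hθF k

theorem eq_and_eq_or_eq_and_eq_of_mul_eq_mul {t u v w z : K} (ht : t ∉ F)
    (hu : u - t ∈ F) (hv : v - t ∈ F) (hw : w - t ∈ F) (hz : z - t ∈ F) (h : u * v = w * z) :
    (u = w ∧ v = z) ∨ (u = z ∧ v = w) := by
  refine eq_and_eq_or_eq_and_eq_of_add_eq_add_of_mul_eq_mul ?_ h
  by_contra hne
  have hs : u + v - (w + z) ≠ 0 := sub_ne_zero.mpr hne
  have hs_mem : u + v - (w + z) ∈ F := by
    convert F.sub_mem (F.add_mem hu hv) (F.add_mem hw hz) using 1; ring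
  have hc_mem : (w - t) * (z - t) - (u - t) * (v - t) ∈ F :=
    F.sub_mem (F.mul_mem hw hz) (F.mul_mem hu hv)
  have ht_eq : t = ((w - t) * (z - t) - (u - t) * (v - t)) / (u + v - (w + z)) :=
    eq_div_of_mul_eq hs (by linear_combination h)
  exact ht (ht_eq ▸ F.div_mem hc_mem hs_mem)

end Subfield

section PowVal

variable {M : Type*} [Monoid M] {g : M} {n : ℕ} [NeZero n]

theorem pow_val_add_of_orderOf_eq (hg : orderOf g = n) (a b : ZMod n) :
    g ^ (a + b).val = g ^ a.val * g ^ b.val := by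
  rw [ZMod.val_add, ← pow_add, ← pow_mod_orderOf g (a.val + b.val), hg]

theorem pow_val_injective_of_orderOf_eq (hg : orderOf g = n) :
    Function.Injective fun a : ZMod n => g ^ a.val := by
  intro a b hab
  have hfin : IsOfFinOrder g := orderOf_pos_iff.mp (hg ▸ NeZero.pos n)
  have hmod := hfin.pow_inj_mod.mp hab
  rw [hg, Nat.mod_eq_of_lt a.val_lt, Nat.mod_eq_of_lt b.val_lt] at hmod
  exact ZMod.val_injective n hmod

end PowVal

/-- The Bose–Chowla set is a Sidon set in ZMod (q^2 - 1). -/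
theorem stmt_2 (q : ℕ) (hq : ∃ p n : ℕ, p.Prime ∧ 0 < n ∧ q = p ^ n)
    {K : Type*} [Field K] (hK : Nat.card K = q ^ 2)
    (F : Subfield K) (hF : Nat.card F = q)
    (θ : Kˣ) (hθ : ∀ x : Kˣ, x ∈ Subgroup.zpowers θ)
    (A : Set (ZMod (q ^ 2 - 1)))
    (hA : A = {a : ZMod (q ^ 2 - 1) | ((θ : K) ^ a.val - (θ : K)) ∈ F}) :
    ∀ a ∈ A, ∀ b ∈ A, ∀ c ∈ A, ∀ d ∈ A,
      a + b = c + d → (a = c ∧ b = d) ∨ (a = d ∧ b = c) := by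
  have hq_two : 2 ≤ q := by
    obtain ⟨p, k, hp, hk, rfl⟩ := hq
    exact Nat.one_lt_pow hk.ne' hp.one_lt
  have hq_sq : 4 ≤ q ^ 2 := Nat.pow_le_pow_left hq_two 2
  have : NeZero (q ^ 2 - 1) := ⟨by omega⟩
  have hord : orderOf (θ : K) = q ^ 2 - 1 := by
    rw [orderOf_units, orderOf_eq_card_of_forall_mem_zpowers hθ, Nat.card_units, hK]
  have hF_ne_top : F ≠ ⊤ := by
    rintro rfl
    have hq_sq_eq : q ^ 2 = q :=
      hK.symm.trans ((Nat.card_congr Subfield.topEquiv.toEquiv).symm.trans hF)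
    nlinarith
  have hθF := Subfield.coe_notMem_of_forall_mem_zpowers hθ hF_ne_top
  have hinj := pow_val_injective_of_orderOf_eq hord
  subst hA
  intro a ha b hb c hc d hd habcd
  have hprod : (θ : K) ^ a.val * (θ : K) ^ b.val = (θ : K) ^ c.val * (θ : K) ^ d.val := by
    rw [← pow_val_add_of_orderOf_eq hord, habcd, pow_val_add_of_orderOf_eq hord]
  rcases Subfield.eq_and_eq_or_eq_and_eq_of_mul_eq_mul hθF ha hb hc hd hprod with h | h
  · exact Or.inl ⟨hinj h.1, hinj h.2⟩
  · exact Or.inr ⟨hinj h.1, hinj h.2⟩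
end

section
/- Let q be a prime power, θ a generator of F_{q^2}^*, and A = { a ∈ Z/(q^2−1)Z : θ^a − θ ∈ F_q }. Then the difference set A − A equals Z/(q^2−1)Z minus the set { s(q+1) : 1 ≤ s ≤ q−2 }. -/
/-!
Since θ ∉ F and the (q - 1)-th roots of unity in K are exactly Fˣ, the power θ^x lies in F
exactly when q + 1 ∣ x. If θ^a and θ^b lie on the line θ + F and θ^a = u θ^b with u ∈ F, then
(u - 1) θ ∈ F, so u = 1: no nonzero multiple of q + 1 is a difference of A. Conversely, if
u = θ^x ∉ F, then 1 and u span K over F, so (u - 1) θ = e + f u with e, f ∈ F. Hence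
u (θ - f) = θ + e, and b = log (θ - f), a = x + b both lie in A.
-/

namespace Subfield

variable {K : Type*} [Field K] (F : Subfield K)

theorem eq_zero_of_mul_mem {t d : K} (ht : t ∉ F) (hd : d ∈ F) (h : d * t ∈ F) : d = 0 := by
  by_contra hd0
  exact ht (by simpa [hd0] using F.div_mem h hd)

theorem eq_one_of_mul_sub_mem {t u w : K} (ht : t ∉ F) (hu : u ∈ F) (huw : u * w - t ∈ F)
    (hw : w - t ∈ F) : u = 1 := by
  have h : (u - 1) * t ∈ F := by
    convert F.sub_mem huw (F.mul_mem hu hw) using 1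
    ring
  exact sub_eq_zero.mp (F.eq_zero_of_mul_mem ht (F.sub_mem hu F.one_mem) h)

theorem exists_eq_add_mul [Finite K] (hK : Nat.card K = Nat.card F ^ 2) {u : K} (hu : u ∉ F)
    (z : K) : ∃ e ∈ F, ∃ f ∈ F, z = e + f * u := by
  have hinj : Function.Injective fun ef : F × F ↦ (ef.1 : K) + ef.2 * u := by
    rintro ⟨e, f⟩ ⟨e', f'⟩ h
    have hf : (f - f' : K) = 0 := by
      refine F.eq_zero_of_mul_mem hu (F.sub_mem f.2 f'.2) ?_
      convert F.sub_mem e'.2 e.2 using 1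
      linear_combination (h : (e : K) + f * u = e' + f' * u)
    have he : (e : K) = e' := by
      linear_combination (h : (e : K) + f * u = e' + f' * u) - u * hf
    exact Prod.ext (Subtype.ext he) (Subtype.ext (sub_eq_zero.mp hf))
  obtain ⟨⟨e, f⟩, h⟩ := (hinj.bijective_of_nat_card_le (by rw [Nat.card_prod, hK, sq])).2 z
  exact ⟨e, e.2, f, f.2, h.symm⟩

theorem exists_mul_add_sub_mem [Finite K] (hK : Nat.card K = Nat.card F ^ 2) {u : K}
    (hu : u ∉ F) (t : K) : ∃ d ∈ F, u * (t + d) - t ∈ F := by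
  obtain ⟨e, he, f, hf, h⟩ := F.exists_eq_add_mul hK hu ((u - 1) * t)
  exact ⟨-f, F.neg_mem hf, by convert he using 1; linear_combination h⟩

theorem pow_card_sub_one_eq_one [Finite F] {z : K} (hz : z ∈ F) (hz0 : z ≠ 0) :
    z ^ (Nat.card F - 1) = 1 := by
  have h := pow_card_eq_one' (x := Units.mk0 (⟨z, hz⟩ : F) fun h ↦ hz0 (congrArg Subtype.val h))
  rw [Nat.card_units] at h
  simpa using congrArg (fun u : Fˣ ↦ ((u : F) : K)) h

theorem mem_of_pow_card_sub_one_eq_one [Finite K] {z : K} (hz : z ^ (Nat.card F - 1) = 1) :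
    z ∈ F := by
  have hpos : 0 < Nat.card F - 1 := Nat.sub_pos_of_lt Finite.one_lt_card
  let roots : Set K := {y | y ^ (Nat.card F - 1) = 1}
  let unitsF : Set K := Set.range (Subtype.val ∘ Units.val : Fˣ → K)
  have hsub : unitsF ⊆ roots := by
    rintro _ ⟨u, rfl⟩
    exact F.pow_card_sub_one_eq_one (u : F).2 (by simp)
  -- Fˣ already supplies q - 1 roots of X ^ (q - 1) - 1, which has no others.
  have hroots : roots.ncard ≤ unitsF.ncard := by
    classical
    rw [Set.ncard_range_of_injective (Subtype.val_injective.comp Units.val_injective),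
      Nat.card_units]
    calc roots.ncard = (Polynomial.nthRootsFinset (Nat.card F - 1) (1 : K)).card := by
          rw [← Set.ncard_coe_finset]; congr; ext; simp [roots, Polynomial.mem_nthRootsFinset hpos]
      _ ≤ Nat.card F - 1 := (Multiset.toFinset_card_le _).trans (Polynomial.card_nthRoots _ _)
  obtain ⟨u, rfl⟩ : z ∈ unitsF := (Set.eq_of_subset_of_ncard_le hsub hroots).symm ▸ hz
  exact (u : F).2

theorem pow_mem_iff_dvd [Finite K] {θ : K} {k : ℕ} (hk : 0 < k)
    (hθ : orderOf θ = k * (Nat.card F - 1)) (m : ℕ) : θ ^ m ∈ F ↔ k ∣ m := by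
  have hpos : 0 < Nat.card F - 1 := Nat.sub_pos_of_lt Finite.one_lt_card
  have hθ0 : θ ≠ 0 := by
    rintro rfl
    have h := pow_orderOf_eq_one (0 : K)
    rw [hθ, zero_pow (Nat.mul_pos hk hpos).ne'] at h
    exact zero_ne_one h
  calc θ ^ m ∈ F ↔ (θ ^ m) ^ (Nat.card F - 1) = 1 :=
        ⟨fun h ↦ F.pow_card_sub_one_eq_one h (pow_ne_zero m hθ0),
          F.mem_of_pow_card_sub_one_eq_one⟩
    _ ↔ k * (Nat.card F - 1) ∣ m * (Nat.card F - 1) := by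
        rw [← pow_mul, ← hθ, orderOf_dvd_iff_pow_eq_one]
    _ ↔ k ∣ m := Nat.mul_dvd_mul_iff_right hpos

end Subfield

section PowZMod

variable {M : Type*} [Monoid M] {x : M} {n : ℕ}

theorem pow_natCast_val (hx : orderOf x = n) (m : ℕ) : x ^ (m : ZMod n).val = x ^ m := by
  rw [ZMod.val_natCast, ← hx, pow_mod_orderOf]

variable [NeZero n]

theorem pow_val_add (hx : orderOf x = n) (a b : ZMod n) :
    x ^ (a + b).val = x ^ a.val * x ^ b.val := by
  rw [← pow_add, ← pow_natCast_val hx (a.val + b.val), Nat.cast_add, ZMod.natCast_zmod_val,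
    ZMod.natCast_zmod_val]

theorem pow_val_eq_one_iff (hx : orderOf x = n) (a : ZMod n) : x ^ a.val = 1 ↔ a = 0 := by
  rw [← orderOf_dvd_iff_pow_eq_one, hx, ← ZMod.natCast_eq_zero_iff, ZMod.natCast_zmod_val]

end PowZMod

theorem ZMod.exists_natCast_mul_iff {n k m : ℕ} [NeZero n] (hn : n = k * (m + 1)) (x : ZMod n) :
    (∃ s, 1 ≤ s ∧ s ≤ m ∧ x = ((s * k : ℕ) : ZMod n)) ↔ x ≠ 0 ∧ k ∣ x.val := by
  have hk : 0 < k := Nat.pos_of_mul_pos_right (hn ▸ Nat.pos_of_neZero n)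
  constructor
  · rintro ⟨s, hs1, hsm, rfl⟩
    have hlt : s * k < n := hn ▸ mul_comm k s ▸ Nat.mul_lt_mul_of_pos_left (by omega) hk
    rw [ZMod.val_cast_of_lt hlt, Ne, ZMod.natCast_eq_zero_iff]
    exact ⟨Nat.not_dvd_of_pos_of_lt (Nat.mul_pos hs1 hk) hlt, dvd_mul_left k s⟩
  · rintro ⟨hx0, s, hs⟩
    have hlt : k * s < k * (m + 1) := hs ▸ hn ▸ x.val_lt
    refine ⟨s, Nat.pos_of_ne_zero ?_, Nat.le_of_lt_succ (Nat.lt_of_mul_lt_mul_left hlt), ?_⟩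
    · rintro rfl
      exact hx0 ((ZMod.val_eq_zero x).mp hs)
    · rw [mul_comm, ← hs, ZMod.natCast_zmod_val]

section BoseChowla

variable {K : Type*} [Field K]

def boseChowlaSet (F : Subfield K) (θ : K) (n : ℕ) : Set (ZMod n) :=
  {a | θ ^ a.val - θ ∈ F}

namespace boseChowlaSet

variable {F : Subfield K} {θ : K} {n : ℕ} [NeZero n]

theorem eq_of_mem (hθF : θ ∉ F) (hθ : orderOf θ = n) {a b : ZMod n}
    (ha : a ∈ boseChowlaSet F θ n) (hb : b ∈ boseChowlaSet F θ n) (hab : θ ^ (a - b).val ∈ F) :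
    a = b := by
  have h : θ ^ (a - b).val = 1 :=
    F.eq_one_of_mul_sub_mem hθF hab (by rwa [← pow_val_add hθ, sub_add_cancel]) hb
  rwa [pow_val_eq_one_iff hθ, sub_eq_zero] at h

theorem exists_sub_eq_of_pow_not_mem [Finite K] (hK : Nat.card K = Nat.card F ^ 2)
    (hθF : θ ∉ F) (hθ : orderOf θ = n) (hlog : ∀ z : K, z ≠ 0 → ∃ a : ZMod n, θ ^ a.val = z)
    {x : ZMod n} (hx : θ ^ x.val ∉ F) :
    ∃ a ∈ boseChowlaSet F θ n, ∃ b ∈ boseChowlaSet F θ n, x = a - b := by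
  obtain ⟨d, hd, hxd⟩ := F.exists_mul_add_sub_mem hK hx θ
  obtain ⟨b, hb⟩ := hlog (θ + d) fun h ↦
    hθF (by simpa [eq_neg_of_add_eq_zero_left h] using F.neg_mem hd)
  refine ⟨x + b, ?_, b, ?_, (add_sub_cancel_right x b).symm⟩
  · rwa [boseChowlaSet, Set.mem_ofPred_eq, pow_val_add hθ, hb]
  · simpa [boseChowlaSet, hb] using hd

theorem exists_sub_eq_iff [Finite K] (hK : Nat.card K = Nat.card F ^ 2)
    (hθF : θ ∉ F) (hθ : orderOf θ = n) (hlog : ∀ z : K, z ≠ 0 → ∃ a : ZMod n, θ ^ a.val = z)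
    (x : ZMod n) :
    (∃ a ∈ boseChowlaSet F θ n, ∃ b ∈ boseChowlaSet F θ n, x = a - b) ↔
      x = 0 ∨ θ ^ x.val ∉ F := by
  constructor
  · rintro ⟨a, ha, b, hb, rfl⟩
    rw [or_iff_not_imp_right, not_not, sub_eq_zero]
    exact eq_of_mem hθF hθ ha hb
  · rintro (rfl | hx)
    · obtain ⟨a, ha⟩ := hlog θ fun h ↦ hθF (h ▸ F.zero_mem)
      exact ⟨a, by simp [boseChowlaSet, ha], a, by simp [boseChowlaSet, ha], (sub_self a).symm⟩
    · exact exists_sub_eq_of_pow_not_mem hK hθF hθ hlog hx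

end boseChowlaSet

end BoseChowla

/-- The difference set of the Bose–Chowla set misses exactly the multiples
s(q+1), 1 ≤ s ≤ q-2. -/
theorem stmt_3 (q : ℕ) (hq : ∃ p n : ℕ, p.Prime ∧ 0 < n ∧ q = p ^ n)
    {K : Type*} [Field K] (hK : Nat.card K = q ^ 2)
    (F : Subfield K) (hF : Nat.card F = q)
    (θ : Kˣ) (hθ : ∀ x : Kˣ, x ∈ Subgroup.zpowers θ)
    (A : Set (ZMod (q ^ 2 - 1)))
    (hA : A = {a : ZMod (q ^ 2 - 1) | ((θ : K) ^ a.val - (θ : K)) ∈ F}) :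
    {x : ZMod (q ^ 2 - 1) | ∃ a ∈ A, ∃ b ∈ A, x = a - b}
      = Set.univ \ {x : ZMod (q ^ 2 - 1) |
          ∃ s : ℕ, 1 ≤ s ∧ s ≤ q - 2 ∧ x = ((s * (q + 1) : ℕ) : ZMod (q ^ 2 - 1))} := by
  subst hA
  have hq0 : q ≠ 0 := by
    obtain ⟨p, n, hp, -, rfl⟩ := hq
    exact pow_ne_zero n hp.ne_zero
  have : Finite K := Nat.finite_of_card_ne_zero (by simp [hK, hq0])
  have hKF : Nat.card K = Nat.card F ^ 2 := by rw [hK, hF]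
  have hq2 : 2 ≤ q := hF ▸ Finite.one_lt_card
  have hN : q ^ 2 - 1 = (q + 1) * (q - 2 + 1) := by
    obtain ⟨r, rfl⟩ := Nat.exists_eq_add_of_le' hq2
    simp only [Nat.add_sub_cancel]
    ring_nf
    omega
  have : NeZero (q ^ 2 - 1) := ⟨by rw [hN]; positivity⟩
  have horder : orderOf (θ : K) = q ^ 2 - 1 := by
    rw [orderOf_units, orderOf_eq_card_of_forall_mem_zpowers hθ, Nat.card_units, hK]
  have hmem : ∀ m, (θ : K) ^ m ∈ F ↔ q + 1 ∣ m :=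
    F.pow_mem_iff_dvd (Nat.succ_pos q) (by rw [horder, hN, hF]; congr 1; omega)
  have hθF : (θ : K) ∉ F := by
    rw [← pow_one (θ : K), hmem]
    exact Nat.not_dvd_of_pos_of_lt one_pos (by omega)
  have hlog : ∀ z : K, z ≠ 0 → ∃ a : ZMod (q ^ 2 - 1), (θ : K) ^ a.val = z := by
    intro z hz
    obtain ⟨m, hm : θ ^ m = Units.mk0 z hz⟩ :=
      mem_powers_iff_mem_zpowers.mpr (hθ (Units.mk0 z hz))
    exact ⟨m, by rw [pow_natCast_val horder, ← Units.val_pow_eq_pow_val, hm, Units.val_mk0]⟩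
  ext x
  rw [Set.mem_sdiff, Set.mem_ofPred_eq, Set.mem_ofPred_eq, ZMod.exists_natCast_mul_iff hN,
    ← hmem]
  exact (boseChowlaSet.exists_sub_eq_iff hKF hθF horder hlog x).trans (by tauto)
end

section
/- Let q be a prime power, θ a generator of F_{q^2}^*, and A = { a ∈ Z/(q^2−1)Z : θ^a − θ ∈ F_q }. Then no multiple s(q+1) with 1 ≤ s ≤ q−2 lies in A − A. -/
/-- No multiple s(q+1) with 1 ≤ s ≤ q-2 lies in A - A for the Bose–Chowla set. -/
theorem stmt_4 (q : ℕ) (hq : ∃ p n : ℕ, p.Prime ∧ 0 < n ∧ q = p ^ n)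
    {K : Type*} [Field K] (hK : Nat.card K = q ^ 2)
    (F : Subfield K) (hF : Nat.card F = q)
    (θ : Kˣ) (hθ : ∀ x : Kˣ, x ∈ Subgroup.zpowers θ)
    (A : Set (ZMod (q ^ 2 - 1)))
    (hA : A = {a : ZMod (q ^ 2 - 1) | ((θ : K) ^ a.val - (θ : K)) ∈ F})
    (s : ℕ) (hs1 : 1 ≤ s) (hs2 : s ≤ q - 2)
    (hmem : ((s * (q + 1) : ℕ) : ZMod (q ^ 2 - 1)) ∈
      {x : ZMod (q ^ 2 - 1) | ∃ a ∈ A, ∃ b ∈ A, x = a - b}) :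
    False := by
  classical
  have hq3 : 3 ≤ q := by omega
  have hq2 : 9 ≤ q ^ 2 := by nlinarith
  have hKfin : Finite K := Nat.finite_of_card_ne_zero (by omega)
  set N := q ^ 2 - 1 with hN
  obtain ⟨a, ha, b, hb, hab⟩ := hmem
  have hNpos : 0 < N := by omega
  haveI : NeZero N := ⟨by omega⟩
  -- order of θ
  have htop : Subgroup.zpowers θ = ⊤ := by
    rw [Subgroup.eq_top_iff']; exact hθ
  have hord : orderOf θ = N := by
    rw [← Nat.card_zpowers, htop]
    have : Nat.card (⊤ : Subgroup Kˣ) = Nat.card Kˣ :=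
      Nat.card_congr Subgroup.topEquiv.toEquiv
    rw [this, Nat.card_units, hK]
  have hfac : (q + 1) * (q - 1) = N := by
    have h1 : 1 ≤ q := by omega
    have h2 : 1 ≤ q ^ 2 := by omega
    zify [h1, h2, hN]; ring
  -- elements of F satisfy x^q = x
  haveI : Fintype F := Fintype.ofFinite F
  have hcardF : Fintype.card F = q := by rw [← Nat.card_eq_fintype_card, hF]
  have hpowF : ∀ x : K, x ∈ F → x ^ q = x := by
    intro x hx
    have := FiniteField.pow_card (⟨x, hx⟩ : F)
    rw [hcardF] at this
    exact congrArg Subtype.val this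
  -- conversely, x^q = x implies x ∈ F
  have hroot : ∀ x : K, x ^ q = x → x ∈ F := by
    intro x hx
    set p : Polynomial K := Polynomial.X ^ q - Polynomial.X with hp
    have hdeg : p.natDegree = q := by
      rw [hp, Polynomial.natDegree_sub_eq_left_of_natDegree_lt] <;>
        simp [Polynomial.natDegree_X_pow] <;> try omega
    have hp0 : p ≠ 0 := by
      intro h; rw [h] at hdeg; simp at hdeg; omega
    have hmemroots : ∀ y : K, y ^ q = y → y ∈ p.roots.toFinset := by
      intro y hy
      simp only [Multiset.mem_toFinset, Polynomial.mem_roots hp0]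
      simp [hp, Polynomial.IsRoot, hy]
    have hsub : (F : Set K) ⊆ (p.roots.toFinset : Set K) := by
      intro y hy; exact hmemroots y (hpowF y hy)
    have hcards : ((p.roots.toFinset : Set K)).ncard ≤ (F : Set K).ncard := by
      rw [Set.ncard_coe_finset]
      have h1 : p.roots.toFinset.card ≤ p.roots.card := Multiset.toFinset_card_le _
      have h2 : p.roots.card ≤ p.natDegree := Polynomial.card_roots' p
      have h3 : (F : Set K).ncard = q := by
        rw [← Nat.card_coe_set_eq]
        simpa using hF
      omega
    have heq : (F : Set K) = (p.roots.toFinset : Set K) :=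
      Set.eq_of_subset_of_ncard_le hsub hcards (p.roots.toFinset.finite_toSet)
    have : x ∈ (p.roots.toFinset : Set K) := hmemroots x hx
    rw [← heq] at this
    exact this
  -- c = θ^(q+1)
  set c : K := (θ : K) ^ (q + 1) with hc
  have hcq1 : c ^ (q - 1) = 1 := by
    rw [hc, ← pow_mul, hfac]
    have : θ ^ N = 1 := by rw [← hord]; exact pow_orderOf_eq_one θ
    calc ((θ : K)) ^ N = ((θ ^ N : Kˣ) : K) := by rw [Units.val_pow_eq_pow_val]
      _ = 1 := by rw [this]; rfl
  have hcF : c ∈ F := by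
    apply hroot
    have : c ^ q = c ^ (q - 1) * c := by
      rw [← pow_succ]; congr 1; omega
    rw [this, hcq1, one_mul]
  have hcs_ne : c ^ s ≠ 1 := by
    intro h
    have hu : (θ : Kˣ) ^ ((q + 1) * s) = 1 := by
      apply Units.ext
      rw [Units.val_pow_eq_pow_val, Units.val_one, pow_mul, ← hc]
      exact h
    have hdvd : N ∣ (q + 1) * s := by
      rw [← hord]; exact orderOf_dvd_of_pow_eq_one hu
    rw [← hfac] at hdvd
    have hdvd2 : q - 1 ∣ s := (mul_dvd_mul_iff_left (by omega : (q + 1) ≠ 0)).mp hdvd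
    have := Nat.le_of_dvd (by omega) hdvd2
    omega
  -- relate exponents
  have habe : a = b + ((s * (q + 1) : ℕ) : ZMod N) := by
    rw [hab]; ring
  have hmodeq : a.val ≡ b.val + s * (q + 1) [MOD N] := by
    rw [← ZMod.natCast_eq_natCast_iff]
    push_cast
    simp only [ZMod.natCast_val, ZMod.cast_id]
    rw [habe]; push_cast; ring
  have hθpow : (θ : K) ^ a.val = (θ : K) ^ b.val * c ^ s := by
    have hu : θ ^ a.val = θ ^ (b.val + s * (q + 1)) := by
      rw [pow_eq_pow_iff_modEq, hord]; exact hmodeq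
    have := congrArg (Units.val) hu
    rw [Units.val_pow_eq_pow_val, Units.val_pow_eq_pow_val] at this
    rw [this, pow_add, hc, ← pow_mul, mul_comm s (q+1)]
  -- membership facts
  rw [hA] at ha hb
  have ha' : (θ : K) ^ a.val - θ ∈ F := ha
  have hb' : (θ : K) ^ b.val - θ ∈ F := hb
  have h2 : ((θ : K) ^ b.val - θ) * c ^ s ∈ F := F.mul_mem hb' (F.pow_mem hcF s)
  have h3 : (θ : K) * (c ^ s - 1) ∈ F := by
    have : (θ : K) * (c ^ s - 1) =
        ((θ : K) ^ b.val * c ^ s - θ) - ((θ : K) ^ b.val - θ) * c ^ s := by ring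
    rw [this, ← hθpow]
    exact F.sub_mem ha' h2
  have hcs1 : c ^ s - 1 ≠ 0 := sub_ne_zero.mpr hcs_ne
  have hθF : (θ : K) ∈ F := by
    have hinv : (c ^ s - 1)⁻¹ ∈ F :=
      F.inv_mem (F.sub_mem (F.pow_mem hcF s) F.one_mem)
    have := F.mul_mem h3 hinv
    rwa [mul_assoc, mul_inv_cancel₀ hcs1, mul_one] at this
  -- contradiction
  have hθq : (θ : K) ^ q = θ := hpowF _ hθF
  have hθq1 : (θ : K) ^ (q - 1) = 1 := by
    have hne : (θ : K) ≠ 0 := Units.ne_zero θ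
    have : (θ : K) ^ (q - 1) * θ = 1 * θ := by
      rw [← pow_succ, one_mul]
      have : q - 1 + 1 = q := by omega
      rw [this, hθq]
    exact mul_right_cancel₀ hne this
  have hu1 : θ ^ (q - 1) = 1 := by
    apply Units.ext
    rw [Units.val_pow_eq_pow_val, hθq1]; rfl
  have hdvd : N ∣ q - 1 := by rw [← hord]; exact orderOf_dvd_of_pow_eq_one hu1
  have hle := Nat.le_of_dvd (by omega : 0 < q - 1) hdvd
  rw [← hfac] at hle
  nlinarith
end

section
/- Let q be an odd prime power, A the Bose–Chowla Sidon set in Z/(q^2−1)Z, and G the graph with i ~ j iff i + j ∈ A (i ≠ j). Then every vertex of G is adjacent to at most two absolute points. -/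
/-!
Writing `x = θ^i` and `t = θ^j`, an absolute point `i` adjacent to `j` gives a solution of
`x t - θ ∈ F` and `x² - θ ∈ F`. For two distinct solutions `x ≠ y`, both `(x - y) t` and
`(x - y)(x + y)` lie in `F`, so `x + y = c t` with `c ∈ F`, and then
`c t² - 2θ = (x t - θ) + (y t - θ) ∈ F`. As `θ ∉ F` and `2 ≠ 0`, this determines `c`; hence all
pairs of distinct solutions have the same sum, which rules out three solutions.
-/

section OrderOf

variable {n : ℕ} [NeZero n]

lemma pow_zmod_val_add {M : Type*} [Monoid M] {g : M} (hg : orderOf g = n) (a b : ZMod n) :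
    g ^ (a + b).val = g ^ a.val * g ^ b.val := by
  subst hg
  rw [ZMod.val_add, pow_mod_orderOf, pow_add]

lemma pow_zmod_val_injective {G : Type*} [LeftCancelMonoid G] {g : G} (hg : orderOf g = n) :
    Function.Injective fun a : ZMod n => g ^ a.val := by
  subst hg
  intro a b hab
  rw [← ZMod.natCast_zmod_val a, ← ZMod.natCast_zmod_val b, ZMod.natCast_eq_natCast_iff]
  exact pow_eq_pow_iff_modEq.mp hab

end OrderOf

lemma two_ne_zero_of_odd_card {K : Type*} [Field K] [Finite K] (h : Odd (Nat.card K)) :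
    (2 : K) ≠ 0 := by
  have := Fintype.ofFinite K
  refine Ring.two_ne_zero fun hchar => ?_
  rw [FiniteField.even_card_iff_char_two, ← Nat.card_eq_fintype_card] at hchar
  exact Nat.not_even_iff_odd.mpr h (Nat.even_iff.mpr hchar)

namespace Subfield

variable {K : Type*} [Field K]

lemma eq_top_of_coe_mem {F : Subfield K} {θ : Kˣ}
    (hθ : ∀ x : Kˣ, x ∈ Subgroup.zpowers θ) (hθF : (θ : K) ∈ F) : F = ⊤ := by
  refine eq_top_iff.mpr fun x _ => ?_
  rcases eq_or_ne x 0 with rfl | hx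
  · exact F.zero_mem
  · obtain ⟨k, hk⟩ := hθ (Units.mk0 x hx)
    rw [← Units.val_mk0 hx, ← hk, Units.val_zpow_eq_zpow_val]
    exact F.zpow_mem hθF k

variable (F : Subfield K) {θ t : K}

lemma eq_of_mul_sub_two_mul_mem (h2 : (2 : K) ≠ 0) (hθ : θ ∉ F) {s c c' : K} (hc : c ∈ F)
    (hc' : c' ∈ F) (h : c * s - 2 * θ ∈ F) (h' : c' * s - 2 * θ ∈ F) : c = c' := by
  by_contra hne
  have hs : s ∈ F := by
    have hdiff : (c - c') * s ∈ F := by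
      rw [show (c - c') * s = (c * s - 2 * θ) - (c' * s - 2 * θ) by ring]
      exact F.sub_mem h h'
    have : s = (c - c')⁻¹ * ((c - c') * s) := by field_simp [sub_ne_zero.mpr hne]
    rw [this]; exact F.mul_mem (F.inv_mem (F.sub_mem hc hc')) hdiff
  apply hθ
  have h2F : (2 : K) ∈ F := ofNat_mem F 2
  have : θ = 2⁻¹ * (c * s - (c * s - 2 * θ)) := by field_simp; ring
  rw [this]
  exact F.mul_mem (F.inv_mem h2F) (F.sub_mem (F.mul_mem hc hs) h)

lemma exists_mem_add_eq_mul (ht : t ≠ 0) {x y : K} (hx : x * t - θ ∈ F) (hx' : x ^ 2 - θ ∈ F)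
    (hy : y * t - θ ∈ F) (hy' : y ^ 2 - θ ∈ F) (hxy : x ≠ y) :
    ∃ c ∈ F, x + y = c * t ∧ c * t ^ 2 - 2 * θ ∈ F := by
  have hlin : (x - y) * t ∈ F := by
    rw [show (x - y) * t = (x * t - θ) - (y * t - θ) by ring]
    exact F.sub_mem hx hy
  have hquad : (x - y) * (x + y) ∈ F := by
    rw [show (x - y) * (x + y) = (x ^ 2 - θ) - (y ^ 2 - θ) by ring]
    exact F.sub_mem hx' hy'
  have hsub : x - y ≠ 0 := sub_ne_zero.mpr hxy
  refine ⟨(x - y) * (x + y) / ((x - y) * t), F.div_mem hquad hlin, by field_simp, ?_⟩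
  have : (x - y) * (x + y) / ((x - y) * t) * t ^ 2 - 2 * θ = (x * t - θ) + (y * t - θ) := by
    field_simp; ring
  rw [this]; exact F.add_mem hx hy

theorem ncard_setOf_mul_sub_mem_and_sq_sub_mem_le_two (h2 : (2 : K) ≠ 0) (hθ : θ ∉ F)
    (ht : t ≠ 0) : {x : K | x * t - θ ∈ F ∧ x ^ 2 - θ ∈ F}.ncard ≤ 2 := by
  rcases Set.finite_or_infinite {x : K | x * t - θ ∈ F ∧ x ^ 2 - θ ∈ F} with hfin | hinf
  · by_contra! hlt
    obtain ⟨x₁, ⟨h₁, h₁'⟩, x₂, ⟨h₂, h₂'⟩, x₃, ⟨h₃, h₃'⟩, h₁₂, h₁₃, h₂₃⟩ :=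
      (Set.two_lt_ncard hfin).mp hlt
    obtain ⟨c, hc, hx₁₂, hcθ⟩ := F.exists_mem_add_eq_mul ht h₁ h₁' h₂ h₂' h₁₂
    obtain ⟨c', hc', hx₁₃, hcθ'⟩ := F.exists_mem_add_eq_mul ht h₁ h₁' h₃ h₃' h₁₃
    have := F.eq_of_mul_sub_two_mul_mem h2 hθ hc hc' hcθ hcθ'
    exact h₂₃ (by linear_combination hx₁₂ - hx₁₃ + t * this)
  · simp [hinf.ncard]

end Subfield

theorem stmt_12_general (q : ℕ) (hodd : Odd q)
    {K : Type*} [Field K] (hK : Nat.card K = q ^ 2)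
    (F : Subfield K) (hF : Nat.card F = q)
    (θ : Kˣ) (hθ : ∀ x : Kˣ, x ∈ Subgroup.zpowers θ)
    (A : Set (ZMod (q ^ 2 - 1)))
    (hA : A = {a : ZMod (q ^ 2 - 1) | ((θ : K) ^ a.val - (θ : K)) ∈ F})
    (G : SimpleGraph (ZMod (q ^ 2 - 1)))
    (hG : ∀ i j, G.Adj i j ↔ i ≠ j ∧ i + j ∈ A)
    (j : ZMod (q ^ 2 - 1)) :
    {i : ZMod (q ^ 2 - 1) | G.Adj j i ∧ 2 * i ∈ A}.ncard ≤ 2 := by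
  have : Finite K := Nat.finite_of_card_ne_zero (by rw [hK]; exact pow_ne_zero 2 hodd.pos.ne')
  have hK1 : 1 < q ^ 2 := hK ▸ Finite.one_lt_card
  have : NeZero (q ^ 2 - 1) := ⟨by omega⟩
  have hord : orderOf θ = q ^ 2 - 1 := by
    rw [orderOf_eq_card_of_forall_mem_zpowers hθ, Nat.card_units, hK]
  have hθF : (θ : K) ∉ F := fun hmem => by
    have := Nat.card_congr (Subfield.topEquiv (K := K)).toEquiv
    rw [← Subfield.eq_top_of_coe_mem hθ hmem, hF, hK] at this
    nlinarith
  have h2 : (2 : K) ≠ 0 := two_ne_zero_of_odd_card (hK ▸ hodd.pow)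
  have hpow_add := pow_zmod_val_add (orderOf_units.trans hord)
  calc _ ≤ {x : K | x * (θ : K) ^ j.val - θ ∈ F ∧ x ^ 2 - θ ∈ F}.ncard := by
        refine Set.ncard_le_ncard_of_injOn (fun i => (θ : K) ^ i.val) ?_ ?_
        · rintro i ⟨hji, hi⟩
          rw [hG, hA, Set.mem_ofPred_eq, hpow_add, mul_comm] at hji
          rw [hA, Set.mem_ofPred_eq, two_mul, hpow_add, ← sq] at hi
          exact ⟨hji.2, hi⟩
        · intro a _ b _ hab
          refine pow_zmod_val_injective hord (Units.val_injective ?_)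
          simpa only [Units.val_pow_eq_pow_val] using hab
    _ ≤ 2 := F.ncard_setOf_mul_sub_mem_and_sq_sub_mem_le_two h2 hθF (by simp)

/-- In the Bose–Chowla sum graph, every vertex is adjacent to at most two
absolute points. -/
theorem stmt_12 (q : ℕ) (hq : ∃ p n : ℕ, p.Prime ∧ 0 < n ∧ q = p ^ n) (hodd : Odd q)
    {K : Type*} [Field K] (hK : Nat.card K = q ^ 2)
    (F : Subfield K) (hF : Nat.card F = q)
    (θ : Kˣ) (hθ : ∀ x : Kˣ, x ∈ Subgroup.zpowers θ)
    (A : Set (ZMod (q ^ 2 - 1)))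
    (hA : A = {a : ZMod (q ^ 2 - 1) | ((θ : K) ^ a.val - (θ : K)) ∈ F})
    (G : SimpleGraph (ZMod (q ^ 2 - 1)))
    (hG : ∀ i j, G.Adj i j ↔ i ≠ j ∧ i + j ∈ A)
    (j : ZMod (q ^ 2 - 1)) :
    {i : ZMod (q ^ 2 - 1) | G.Adj j i ∧ 2 * i ∈ A}.ncard ≤ 2 :=
  stmt_12_general q hodd hK F hF θ hθ A hA G hG j
end
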